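/- The counter invariant characterizes propagation exhaustively: for a conditional cardinality constraint l_y ↔ (Σᵢ₌₁ⁿ lᵢ ≥ k) with 0 ≤ k ≤ n, and any partial assignment with trueCount literals among l₁,...,lₙ assigned true and undefCount unassigned, exactly one of the following holds or the constraint is extendable without forced assignments: (a) if trueCount ≥ k then all satisfying extensions set l_y true; (b) if trueCount + undefCount < k then all satisfying extensions set l_y false; (c) if neither (a) nor (b) holds and l_y is unassigned, then there exist satisfying extensions with l_y true and with l_y false. -/

import Mathlib

open Finset

/-- Truth value of a literal `(v, p)` under a total assignment. -/
def evalLit {V : Type} (σ : V → Bool) (l : V × Bool) : Bool :=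
  if l.2 then σ l.1 else !(σ l.1)

/-- Number of true literals among `l₁,...,lₙ` under a total assignment. -/
def trueCount {V : Type} {n : ℕ} (σ : V → Bool) (l : Fin n → V × Bool) : ℕ :=
  (Finset.univ.filter (fun i => evalLit σ (l i) = true)).card

/-- The conditional cardinality constraint `l_y ↔ (Σᵢ lᵢ ≥ k)` is satisfied by `σ`. -/
def SatCC {V : Type} {n : ℕ} (σ : V → Bool) (l : Fin n → V × Bool) (ly : V × Bool)
    (k : ℕ) : Prop :=
  evalLit σ ly = true ↔ k ≤ trueCount σ l

/-- Truth value of a literal under a partial assignment (`none` if unassigned). -/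
def pEvalLit {V : Type} (ρ : V → Option Bool) (l : V × Bool) : Option Bool :=
  (ρ l.1).map (fun b => if l.2 then b else !b)

/-- A total assignment `σ` extends a partial assignment `ρ`. -/
def Extends {V : Type} (ρ : V → Option Bool) (σ : V → Bool) : Prop :=
  ∀ v b, ρ v = some b → σ v = b

lemma evalLit_of_pEval {V : Type} {ρ : V → Option Bool} {σ : V → Bool}
    (h : Extends ρ σ) {l : V × Bool} {b : Bool} (hp : pEvalLit ρ l = some b) :
    evalLit σ l = b := by
  unfold pEvalLit at hp
  cases hρ : ρ l.1 with
  | none => simp [hρ] at hp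
  | some c =>
    rw [hρ] at hp
    simp only [Option.map_some, Option.some.injEq] at hp
    have hc := h _ _ hρ
    unfold evalLit
    rw [hc, hp]
/-- the counter invariant characterizes propagation exhaustively. -/
theorem stmt10 {V : Type} {n : ℕ} (l : Fin n → V × Bool) (ly : V × Bool) (k : ℕ)
    (hkn : k ≤ n)
    (hdistinct : Function.Injective (fun i => (l i).1))
    (hly : ∀ i, (l i).1 ≠ ly.1)
    (ρ : V → Option Bool)
    (tc uc : ℕ)
    (htc : tc = (Finset.univ.filter (fun i => pEvalLit ρ (l i) = some true)).card)
    (huc : uc = (Finset.univ.filter (fun i => pEvalLit ρ (l i) = none)).card) :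
    ((k ≤ tc → ∀ σ : V → Bool, Extends ρ σ → SatCC σ l ly k → evalLit σ ly = true) ∧
     (tc + uc < k → ∀ σ : V → Bool, Extends ρ σ → SatCC σ l ly k → evalLit σ ly = false) ∧
     (¬ k ≤ tc → ¬ tc + uc < k → pEvalLit ρ ly = none →
        (∃ σ : V → Bool, Extends ρ σ ∧ SatCC σ l ly k ∧ evalLit σ ly = true) ∧
        (∃ σ : V → Bool, Extends ρ σ ∧ SatCC σ l ly k ∧ evalLit σ ly = false))) := by
  classical
  set A : Finset (Fin n) := Finset.univ.filter (fun i => pEvalLit ρ (l i) = some true) with hA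
  set S : Finset (Fin n) := Finset.univ.filter (fun i => pEvalLit ρ (l i) = none) with hS
  have memA : ∀ i : Fin n, i ∈ A ↔ pEvalLit ρ (l i) = some true := by
    intro i; rw [hA, Finset.mem_filter]; simp
  have memS : ∀ i : Fin n, i ∈ S ↔ pEvalLit ρ (l i) = none := by
    intro i; rw [hS, Finset.mem_filter]; simp
  -- bounds for any extension
  have hlow : ∀ σ : V → Bool, Extends ρ σ → tc ≤ trueCount σ l := by
    intro σ hσ
    rw [htc]
    apply Finset.card_le_card
    intro i hi
    simp only [Finset.mem_filter, Finset.mem_univ, true_and]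
    exact evalLit_of_pEval hσ ((memA i).mp hi)
  have hhigh : ∀ σ : V → Bool, Extends ρ σ → trueCount σ l ≤ tc + uc := by
    intro σ hσ
    rw [htc, huc, ← Finset.card_union_of_disjoint (Finset.disjoint_left.mpr (by
      intro i hiA hiS
      rw [memA i] at hiA
      rw [memS i, hiA] at hiS
      exact nomatch hiS))]
    apply Finset.card_le_card
    intro i hi
    simp only [Finset.mem_filter, Finset.mem_univ, true_and] at hi
    rw [Finset.mem_union, memA i, memS i]
    cases hp : pEvalLit ρ (l i) with
    | none => right; rfl
    | some b =>
      left
      have := evalLit_of_pEval hσ hp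
      rw [hi] at this
      rw [← this]
  refine ⟨?_, ?_, ?_⟩
  · intro hk σ hσ hsat
    exact hsat.mpr (le_trans hk (hlow σ hσ))
  · intro hk σ hσ hsat
    have hnot : ¬ (k ≤ trueCount σ l) := by
      have := hhigh σ hσ; omega
    cases h : evalLit σ ly with
    | false => rfl
    | true => exact absurd (hsat.mp h) hnot
  · intro h1 h2 h3
    have hρy : ρ ly.1 = none := by
      unfold pEvalLit at h3
      cases h : ρ ly.1 with
      | none => rfl
      | some c => rw [h] at h3; simp at h3
    -- key construction
    have key : ∀ T : Finset (Fin n), T ⊆ S → ∀ d : Bool,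
        ∃ σ : V → Bool, Extends ρ σ ∧ trueCount σ l = tc + T.card ∧ evalLit σ ly = d := by
      intro T hT d
      set f : V → Bool := fun v =>
        if h : ∃ i, (l i).1 = v then
          (if (l h.choose).2 then (decide (h.choose ∈ T)) else !(decide (h.choose ∈ T)))
        else (if ly.2 then d else !d) with hf
      set σ : V → Bool := fun v => (ρ v).getD (f v) with hσdef
      have hext : Extends ρ σ := by
        intro v b hv
        simp [hσdef, hv]
      have hσi : ∀ i, pEvalLit ρ (l i) = none → evalLit σ (l i) = decide (i ∈ T) := by
        intro i hi
        have hρi : ρ (l i).1 = none := by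
          unfold pEvalLit at hi
          cases h : ρ (l i).1 with
          | none => rfl
          | some c => rw [h] at hi; simp at hi
        have hex : ∃ j, (l j).1 = (l i).1 := ⟨i, rfl⟩
        have hj : hex.choose = i := hdistinct hex.choose_spec
        have hσv : σ (l i).1 = (if (l i).2 then (decide (i ∈ T)) else !(decide (i ∈ T))) := by
          simp only [hσdef, hρi, Option.getD_none, hf, dif_pos hex, hj]
        unfold evalLit
        rw [hσv]
        cases (l i).2 <;> simp
      have hcount : trueCount σ l = tc + T.card := by
        have hset : Finset.univ.filter (fun i => evalLit σ (l i) = true) = A ∪ T := by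
          ext i
          simp only [Finset.mem_filter, Finset.mem_univ, true_and, Finset.mem_union]
          rw [memA i]
          cases hp : pEvalLit ρ (l i) with
          | none =>
            rw [hσi i hp]
            simp only [decide_eq_true_eq]
            constructor
            · intro h; right; exact h
            · rintro (h | h)
              · exact nomatch h
              · exact h
          | some b =>
            have he := evalLit_of_pEval hext hp
            have hiT : i ∉ T := by
              intro hiT
              have := (memS i).mp (hT hiT)
              rw [hp] at this
              exact nomatch this
            constructor
            · intro h
              left
              rw [he] at h
              rw [h]
            · rintro (h | h)
              · rw [he]; exact Option.some_injective _ h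
              · exact absurd h hiT
        have hdisj : Disjoint A T := by
          apply Finset.disjoint_left.mpr
          intro i hiA hiT
          have := (memS i).mp (hT hiT)
          rw [(memA i).mp hiA] at this
          exact nomatch this
        unfold trueCount
        rw [hset, Finset.card_union_of_disjoint hdisj, ← htc]
      have hy : evalLit σ ly = d := by
        have hnex : ¬ ∃ i, (l i).1 = ly.1 := by
          rintro ⟨i, hi⟩; exact hly i hi
        have hσv : σ ly.1 = (if ly.2 then d else !d) := by
          simp only [hσdef, hρy, Option.getD_none, hf, dif_neg hnex]
        unfold evalLit
        rw [hσv]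
        cases ly.2 <;> simp
      exact ⟨σ, hext, hcount, hy⟩
    have hScard : uc = S.card := huc
    constructor
    · -- true extension: pick T of size k - tc
      obtain ⟨T, hT, hTcard⟩ := Finset.exists_subset_card_eq (s := S) (n := k - tc) (by omega)
      obtain ⟨σ, hext, hcount, hy⟩ := key T hT true
      refine ⟨σ, hext, ?_, hy⟩
      unfold SatCC
      rw [hy, hcount, hTcard]
      simp only [true_iff]
      omega
    · obtain ⟨σ, hext, hcount, hy⟩ := key ∅ (Finset.empty_subset S) false
      refine ⟨σ, hext, ?_, hy⟩
      unfold SatCC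
      rw [hy, hcount]
      simp only [Finset.card_empty, Nat.add_zero]
      constructor
      · intro h; exact Bool.noConfusion h
      · intro h; omega
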